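/- arXiv:2103.07318 — 3 statements merged into one kernel-verified Lean document; each statement's English description precedes it below -/
import Mathlib

section
/- Let γ₁, γ₂, γ₃, γ₄ be real numbers and let A be the 4×4 matrix with entries A_{ij} = sin(i·γⱼ) for 1 ≤ i, j ≤ 4. Then det A = 64 · ∏_{k=1}^4 sin(γₖ) · ∏_{1 ≤ i < j ≤ 4} (cos(γᵢ) − cos(γⱼ)). -/
open Real Finset

private lemma sin3 (x : ℝ) : Real.sin (3 * x) = Real.sin x * (4 * Real.cos x ^ 2 - 1) := by
  have h := Real.sin_sq_add_cos_sq x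
  rw [Real.sin_three_mul]
  linear_combination (-4 * Real.sin x) * h

private lemma sin4 (x : ℝ) : Real.sin (4 * x) = Real.sin x * (8 * Real.cos x ^ 3 - 4 * Real.cos x) := by
  rw [show (4:ℝ) * x = 2 * (2 * x) by ring, Real.sin_two_mul, Real.sin_two_mul, Real.cos_two_mul]
  ring

private lemma det4 (A : Matrix (Fin 4) (Fin 4) ℝ) :
    A.det =
      A 0 0 * (A 1 1 * (A 2 2 * A 3 3 - A 2 3 * A 3 2) - A 1 2 * (A 2 1 * A 3 3 - A 2 3 * A 3 1)
        + A 1 3 * (A 2 1 * A 3 2 - A 2 2 * A 3 1))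
      - A 0 1 * (A 1 0 * (A 2 2 * A 3 3 - A 2 3 * A 3 2) - A 1 2 * (A 2 0 * A 3 3 - A 2 3 * A 3 0)
        + A 1 3 * (A 2 0 * A 3 2 - A 2 2 * A 3 0))
      + A 0 2 * (A 1 0 * (A 2 1 * A 3 3 - A 2 3 * A 3 1) - A 1 1 * (A 2 0 * A 3 3 - A 2 3 * A 3 0)
        + A 1 3 * (A 2 0 * A 3 1 - A 2 1 * A 3 0))
      - A 0 3 * (A 1 0 * (A 2 1 * A 3 2 - A 2 2 * A 3 1) - A 1 1 * (A 2 0 * A 3 2 - A 2 2 * A 3 0)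
        + A 1 2 * (A 2 0 * A 3 1 - A 2 1 * A 3 0)) := by
  rw [Matrix.det_succ_row_zero, Fin.sum_univ_four]
  norm_num [Matrix.det_fin_three, Fin.succAbove, Fin.lt_def, Matrix.submatrix_apply,
    show (Fin.succ 2 : Fin 4) = 3 from rfl, show ((3:Fin 4).1 : ℕ) = 3 from rfl,
    show (Fin.castSucc 2 : Fin 4) = 2 from rfl]
  ring

theorem det_sin_matrix (γ : Fin 4 → ℝ)
    (A : Matrix (Fin 4) (Fin 4) ℝ)
    (hA : ∀ i j, A i j = Real.sin ((i.1 + 1) * γ j)) :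
    A.det = 64 * (∏ k, Real.sin (γ k)) *
      ∏ i, ∏ j ∈ Finset.univ.filter (fun j => i < j),
        (Real.cos (γ i) - Real.cos (γ j)) := by
  have f0 : (Finset.univ.filter (fun j => (0:Fin 4) < j)) = {1,2,3} := by decide
  have f1 : (Finset.univ.filter (fun j => (1:Fin 4) < j)) = {2,3} := by decide
  have f2 : (Finset.univ.filter (fun j => (2:Fin 4) < j)) = {3} := by decide
  have f3 : (Finset.univ.filter (fun j => (3:Fin 4) < j)) = (∅ : Finset (Fin 4)) := by decide
  rw [det4]
  simp only [hA]
  rw [Fin.prod_univ_four, Fin.prod_univ_four, f0, f1, f2, f3,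
    Finset.prod_insert (by decide), Finset.prod_insert (by decide),
    Finset.prod_insert (by decide), Finset.prod_singleton, Finset.prod_singleton,
    Finset.prod_singleton, Finset.prod_empty]
  norm_num [Fin.prod_univ_four, show ((3:Fin 4).1 : ℕ) = 3 from rfl,
    Finset.prod_insert, Finset.mem_insert, Finset.prod_singleton]
  norm_num [sin3, sin4, Real.sin_two_mul]
  ring
end

section
/- Let γ₁, γ₂, γ₃ be reals and λ₁, λ₂, λ₃ nonzero reals satisfying ∑_{k=1}^3 λₖ sin(l γₖ) = 0 for l = 1, 2, 3. Then ∏_{k=1}^3 sin(γₖ) · ∏_{1≤i<j≤3} (cos(γᵢ) − cos(γⱼ)) = 0. -/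
open Finset

theorem three_term_sin_system (γ lam : Fin 3 → ℝ)
    (hlam : ∀ k, lam k ≠ 0)
    (h : ∀ l : ℕ, 1 ≤ l → l ≤ 3 → ∑ k, lam k * Real.sin (l * γ k) = 0) :
    (∏ k, Real.sin (γ k)) *
      ∏ i, ∏ j ∈ Finset.univ.filter (fun j => i < j),
        (Real.cos (γ i) - Real.cos (γ j)) = 0 := by
  have h1 := h 1 (by norm_num) (by norm_num)
  have h2 := h 2 (by norm_num) (by norm_num)
  have h3 := h 3 (by norm_num) (by norm_num)
  simp only [Fin.sum_univ_three, Nat.cast_one, Nat.cast_ofNat, one_mul] at h1 h2 h3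
  rw [Real.sin_two_mul, Real.sin_two_mul, Real.sin_two_mul] at h2
  rw [Real.sin_three_mul, Real.sin_three_mul, Real.sin_three_mul] at h3
  by_contra hC
  have hprod : (Real.sin (γ 0) * (Real.sin (γ 1) * Real.sin (γ 2))) *
      ((Real.cos (γ 0) - Real.cos (γ 1)) * (Real.cos (γ 0) - Real.cos (γ 2)) *
       (Real.cos (γ 1) - Real.cos (γ 2))) ≠ 0 := by
    intro hz
    apply hC
    rw [Fin.prod_univ_three, Fin.prod_univ_three]
    have e0 : (Finset.univ.filter (fun j => (0:Fin 3) < j)) = {1, 2} := by decide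
    have e1 : (Finset.univ.filter (fun j => (1:Fin 3) < j)) = {2} := by decide
    have e2 : (Finset.univ.filter (fun j => (2:Fin 3) < j)) = ∅ := by decide
    rw [e0, e1, e2]
    simp only [Finset.prod_insert (by decide : (1:Fin 3) ∉ ({2} : Finset (Fin 3))),
      Finset.prod_singleton, Finset.prod_empty, mul_one]
    linear_combination hz
  have hs0 : Real.sin (γ 0) ≠ 0 := fun hz => hprod (by rw [hz]; ring)
  have hs1 : Real.sin (γ 1) ≠ 0 := fun hz => hprod (by rw [hz]; ring)
  have hs2 : Real.sin (γ 2) ≠ 0 := fun hz => hprod (by rw [hz]; ring)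
  have hc01 : Real.cos (γ 0) - Real.cos (γ 1) ≠ 0 := fun hz => hprod (by rw [hz]; ring)
  have hc02 : Real.cos (γ 0) - Real.cos (γ 2) ≠ 0 := fun hz => hprod (by rw [hz]; ring)
  have p0 := Real.sin_sq_add_cos_sq (γ 0)
  have p1 := Real.sin_sq_add_cos_sq (γ 1)
  have p2 := Real.sin_sq_add_cos_sq (γ 2)
  have key : lam 0 * Real.sin (γ 0) *
      ((Real.cos (γ 0) - Real.cos (γ 1)) * (Real.cos (γ 0) - Real.cos (γ 2))) = 0 := by
    linear_combination (Real.cos (γ 1) * Real.cos (γ 2)) * h1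
      - (Real.cos (γ 1) + Real.cos (γ 2)) / 2 * h2
      + (h3 + h1) / 4
      + lam 0 * Real.sin (γ 0) * p0 + lam 1 * Real.sin (γ 1) * p1
      + lam 2 * Real.sin (γ 2) * p2
  exact (mul_ne_zero (mul_ne_zero (hlam 0) hs0) (mul_ne_zero hc01 hc02)) key
end

section
/- Let f : ℝ → ℝ be 2π-periodic, p ∈ (0, 1/2), p' = (1−2p)/(2−3p), and define f'(x) = (1−p) f(x − π/3) + (1−p) f(x + π/3) + (2p−1) f(x − π). Then for all x, p' f'(x − π) + (1−p') f'(x − π/3) = p f(x) + (1−p) f(x − 2π/3). -/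
/-! By `2π`-periodicity, `f'(x - π)` and `f'(x - π/3)` are both combinations of the three values
`f x`, `f (x - 2π/3)`, `f (x + 2π/3)` on an orbit of the rotation by `2π/3`. The weight `p'` is the
one that cancels the coefficient of `f (x + 2π/3)`; the remaining coefficients are then `p` and
`1 - p`. -/

open Real

lemma mixture_weights_eq {p : ℝ} (hp : 2 - 3 * p ≠ 0) (a b c : ℝ) :
    (1 - 2*p) / (2 - 3*p) * ((1 - p) * c + (1 - p) * b + (2*p - 1) * a)
      + (1 - (1 - 2*p) / (2 - 3*p)) * ((1 - p) * b + (1 - p) * a + (2*p - 1) * c)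
      = p * a + (1 - p) * b := by
  linear_combination (c - a) * mul_div_cancel₀ (1 - 2*p) hp

theorem nonidentifiability_two_pi_over_three_general (f : ℝ → ℝ) (p : ℝ)
    (hper : Function.Periodic f (2 * Real.pi))
    (hp2 : p < 1/2) :
    let p' := (1 - 2*p) / (2 - 3*p)
    let f' := fun x => (1 - p) * f (x - Real.pi/3) + (1 - p) * f (x + Real.pi/3)
      + (2*p - 1) * f (x - Real.pi)
    ∀ x : ℝ, p' * f' (x - Real.pi) + (1 - p') * f' (x - Real.pi/3)
      = p * f x + (1 - p) * f (x - 2*Real.pi/3) := by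
  intro p' f' x
  have hp : 2 - 3 * p ≠ 0 := by linarith
  have h_sub_pi : f' (x - π)
      = (1 - p) * f (x + 2*π/3) + (1 - p) * f (x - 2*π/3) + (2*p - 1) * f x := by
    simp only [f']
    rw [show x - π - π/3 = x + 2*π/3 - 2*π by ring, hper.sub_eq,
      show x - π + π/3 = x - 2*π/3 by ring, show x - π - π = x - 2*π by ring, hper.sub_eq]
  have h_sub_pi_div_three : f' (x - π/3)
      = (1 - p) * f (x - 2*π/3) + (1 - p) * f x + (2*p - 1) * f (x + 2*π/3) := by
    simp only [f']
    rw [show x - π/3 - π/3 = x - 2*π/3 by ring, show x - π/3 + π/3 = x by ring,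
      show x - π/3 - π = x + 2*π/3 - 2*π by ring, hper.sub_eq]
  rw [h_sub_pi, h_sub_pi_div_three]
  exact mixture_weights_eq hp _ _ _

theorem nonidentifiability_two_pi_over_three (f : ℝ → ℝ) (p : ℝ)
    (hper : Function.Periodic f (2 * Real.pi))
    (hp : 0 < p) (hp2 : p < 1/2) :
    let p' := (1 - 2*p) / (2 - 3*p)
    let f' := fun x => (1 - p) * f (x - Real.pi/3) + (1 - p) * f (x + Real.pi/3)
      + (2*p - 1) * f (x - Real.pi)
    ∀ x : ℝ, p' * f' (x - Real.pi) + (1 - p') * f' (x - Real.pi/3)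
      = p * f x + (1 - p) * f (x - 2*Real.pi/3) :=
  nonidentifiability_two_pi_over_three_general f p hper hp2
end
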